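/- arXiv:0804.1999 — 4 statements merged into one kernel-verified Lean document; each statement's English description precedes it below -/
import Mathlib

section
/- Let F be a group with normal subgroups R1, R2, R3, and let D = [R1, R2 ⊓ R3] ⊔ [R2, R3 ⊓ R1] ⊔ [R3, R1 ⊓ R2]. Suppose x1, x2 ∈ R1, y1, y2 ∈ R2, x1·y1 ∈ R3 and x2·y2 ∈ R3. Then [x1·x2, y1^{x2}·y2] ≡ [y2⁻¹, x1]·[y1⁻¹, x2]·[x1, y1]·[x2, y2] modulo D. -/
/-- The commutator `[x, y] = x⁻¹ y⁻¹ x y`. -/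
def cmt {F : Type*} [Group F] (x y : F) : F := x⁻¹ * y⁻¹ * x * y

/-!
Modulo `D`, every element of `R3` commutes with every element of `R1 ⊓ R2 ⊇ [R1, R2]`. Expanding
`[x1 x2, y1^x2 y2]` by the product rules for commutators produces the four commutators of the right
hand side, but conjugated by `x2 y2`, `x1 y1 ∈ R3` or by `[x2, y2] ∈ R3`; all of these conjugations
act trivially on `[R1, R2]` in `F ⧸ D`. So the identity holds exactly in any group in which
a normal subgroup `P` centralizes `[N1, N2]`; take the images of `R3`, `R1`, `R2` in `F ⧸ D`.
-/

section Commutator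

variable {G H : Type*} [Group G] [Group H]

open scoped commutatorElement

theorem cmt_eq_commutatorElement (x y : G) : cmt x y = ⁅x⁻¹, y⁻¹⁆ := by
  simp only [cmt, commutatorElement_def, inv_inv]

theorem map_cmt (f : G →* H) (x y : G) : f (cmt x y) = cmt (f x) (f y) := by
  simp only [cmt, map_mul, map_inv]

theorem cmt_mem_commutator {N1 N2 : Subgroup G} {x y : G} (hx : x ∈ N1) (hy : y ∈ N2) :
    cmt x y ∈ ⁅N1, N2⁆ := by
  rw [cmt_eq_commutatorElement]
  exact Subgroup.commutator_mem_commutator (inv_mem hx) (inv_mem hy)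

theorem cmt_mem_of_mem_right {P : Subgroup G} [P.Normal] (x : G) {p : G} (hp : p ∈ P) :
    cmt x p ∈ P :=
  Subgroup.commutator_le_right ⊤ P (cmt_mem_commutator (Subgroup.mem_top x) hp)

theorem conj_eq_of_commutator_eq_bot {P K : Subgroup G} (hPK : ⁅P, K⁆ = ⊥) {p q : G}
    (hp : p ∈ P) (hq : q ∈ K) : p⁻¹ * q * p = q := by
  have hcomm : q * p = p * q :=
    Subgroup.mem_centralizer_iff.mp (Subgroup.commutator_eq_bot_iff_le_centralizer.mp hPK hp) q hq
  rw [mul_assoc, hcomm, inv_mul_cancel_left]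

theorem cmt_mul_conj_mul_eq {P N1 N2 : Subgroup G} [P.Normal] [N1.Normal] [N2.Normal]
    (hP : ⁅P, ⁅N1, N2⁆⁆ = ⊥) {a b c e : G} (ha : a ∈ N1) (hb : b ∈ N1) (hc : c ∈ N2)
    (he : e ∈ N2) (hac : a * c ∈ P) (hbe : b * e ∈ P) :
    cmt (a * b) (b⁻¹ * c * b * e) = cmt e⁻¹ a * cmt c⁻¹ b * cmt a c * cmt b e := by
  set x := cmt a (b⁻¹ * c * b)
  have fix {p q : G} (hp : p ∈ P) (hq : q ∈ ⁅N1, N2⁆) : p⁻¹ * q * p = q :=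
    conj_eq_of_commutator_eq_bot hP hp hq
  have hbc : cmt b c ∈ ⁅N1, N2⁆ := cmt_mem_commutator hb hc
  have hx : e⁻¹ * x * e ∈ ⁅N1, N2⁆ :=
    (Subgroup.commutator_normal N1 N2).conj_mem' _
      (cmt_mem_commutator ha ((‹N2.Normal›).conj_mem' c hc b)) e
  have hbe' : cmt b e ∈ P := by
    have h : cmt b e = cmt b (b * e) := by simp only [cmt]; group
    exact h ▸ cmt_mem_of_mem_right b hbe
  have hbe_bc_comm : cmt b e * cmt b c = cmt b c * cmt b e := by
    conv_lhs => rw [← fix hbe' hbc]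
    group
  calc cmt (a * b) (b⁻¹ * c * b * e)
      = e * ((b * e)⁻¹ * cmt a e * (b * e)) * e⁻¹ *
          (e * ((b * e)⁻¹ * (e⁻¹ * x * e) * (b * e)) * e⁻¹) * cmt b e *
          ((b * e)⁻¹ * cmt b c * (b * e)) := by
        simp only [x, cmt]; group
    _ = e * cmt a e * e⁻¹ * x * (cmt b e * cmt b c) := by
        rw [fix hbe (cmt_mem_commutator ha he), fix hbe hx, fix hbe hbc]; group
    _ = e * cmt a e * e⁻¹ * (c * ((a * c)⁻¹ * cmt b c * (a * c)) * c⁻¹) * cmt a c * cmt b e := by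
        rw [hbe_bc_comm]; simp only [x, cmt]; group
    _ = cmt e⁻¹ a * cmt c⁻¹ b * cmt a c * cmt b e := by
        rw [fix hac hbc]; simp only [cmt]; group

end Commutator

theorem stmt_6 {F : Type*} [Group F] (R1 R2 R3 : Subgroup F)
    [R1.Normal] [R2.Normal] [R3.Normal]
    (D : Subgroup F)
    (hD : D = ⁅R1, R2 ⊓ R3⁆ ⊔ ⁅R2, R3 ⊓ R1⁆ ⊔ ⁅R3, R1 ⊓ R2⁆)
    (x1 x2 y1 y2 : F) (hx1 : x1 ∈ R1) (hx2 : x2 ∈ R1)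
    (hy1 : y1 ∈ R2) (hy2 : y2 ∈ R2)
    (h1 : x1 * y1 ∈ R3) (h2 : x2 * y2 ∈ R3) :
    cmt (x1 * x2) ((x2⁻¹ * y1 * x2) * y2) *
      (cmt y2⁻¹ x1 * cmt y1⁻¹ x2 * cmt x1 y1 * cmt x2 y2)⁻¹ ∈ D := by
  have : D.Normal := by rw [hD]; infer_instance
  set π := QuotientGroup.mk' D
  have hcent : ⁅R3.map π, ⁅R1.map π, R2.map π⁆⁆ = ⊥ := by
    rw [← Subgroup.map_commutator, ← Subgroup.map_commutator, eq_bot_iff,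
      Subgroup.map_le_iff_le_comap, MonoidHom.comap_bot, QuotientGroup.ker_mk', hD]
    exact (Subgroup.commutator_mono le_rfl (Subgroup.commutator_le_inf R1 R2)).trans le_sup_right
  have hmem {R : Subgroup F} {x : F} (hx : x ∈ R) : π x ∈ R.map π := Subgroup.mem_map_of_mem π hx
  have key := cmt_mul_conj_mul_eq hcent (hmem hx1) (hmem hx2) (hmem hy1) (hmem hy2)
    (map_mul π x1 y1 ▸ hmem h1) (map_mul π x2 y2 ▸ hmem h2)
  rw [← QuotientGroup.ker_mk' D, MonoidHom.mem_ker, map_mul, map_inv, mul_inv_eq_one]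
  simpa only [map_mul, map_inv, map_cmt] using key
end

section
/- Let F be a group with normal subgroups R1, R2, R3 and D = [R1, R2 ⊓ R3] ⊔ [R2, R3 ⊓ R1] ⊔ [R3, R1 ⊓ R2]. Suppose for i = 1, 2, 3 we have xi ∈ R1, yi ∈ R2 with xi·yi ∈ R3. Then [y3⁻¹, x1·x2]·[y2⁻¹·(y1⁻¹)^{x2}, x3] ≡ [y3⁻¹, x2]·[y2⁻¹, x3]·[y3⁻¹, x1]·[y1⁻¹, x3] modulo D. -/
section Cmt

variable {G : Type*} [Group G]

open scoped commutatorElement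

theorem cmt_eq_commutatorElement_s7 (a b : G) : cmt a b = ⁅a⁻¹, b⁻¹⁆ := by
  simp only [cmt, commutatorElement_def, inv_inv]

theorem map_cmt_s7 {H : Type*} [Group H] (f : G →* H) (a b : G) :
    f (cmt a b) = cmt (f a) (f b) := by
  simp only [cmt, map_mul, map_inv]

theorem cmt_eq_one_of_commute {a b : G} (h : Commute a b) : cmt a b = 1 := by
  rw [cmt_eq_commutatorElement_s7, commutatorElement_eq_one_iff_commute]
  exact h.inv_inv

theorem cmt_mul_cmt_swap (a b : G) : cmt a b * cmt b a = 1 := by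
  simp only [cmt]; group

theorem cmt_mem_inf {H K : Subgroup G} [H.Normal] [K.Normal] {a b : G} (ha : a ∈ H)
    (hb : b ∈ K) : cmt a b ∈ H ⊓ K := by
  rw [cmt_eq_commutatorElement_s7]
  exact Subgroup.commutator_le_inf H K
    (Subgroup.commutator_mem_commutator (inv_mem ha) (inv_mem hb))

/-- Modulo `N`, `y⁻¹ ≡ x` and `y'⁻¹ ≡ x'`, so the product becomes `[x, x'] [x', x] = 1`. -/
theorem cmt_inv_mul_cmt_inv_mem {N : Subgroup G} [N.Normal] {x y x' y' : G}
    (h : x * y ∈ N) (h' : x' * y' ∈ N) : cmt y⁻¹ x' * cmt y'⁻¹ x ∈ N := by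
  rw [← QuotientGroup.ker_mk' N, MonoidHom.mem_ker] at h h' ⊢
  rw [map_mul, mul_eq_one_iff_eq_inv] at h h'
  rw [map_mul, map_cmt_s7, map_cmt_s7, map_inv, map_inv, ← h, ← h']
  exact cmt_mul_cmt_swap _ _

theorem cmt_additivity_of_commute {x1 x2 x3 y1 y2 y3 : G}
    (hv : Commute (cmt y1⁻¹ (x2 * y2)) x3)
    (hvE : Commute (cmt y1⁻¹ (x2 * y2)) (cmt y1⁻¹ x3))
    (hA : Commute (x2 * y2) (cmt y3⁻¹ x1))
    (hAE : Commute y2 (cmt y3⁻¹ x1 * cmt y1⁻¹ x3))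
    (hAEB : Commute (cmt y2⁻¹ x3) (cmt y3⁻¹ x1 * cmt y1⁻¹ x3)) :
    cmt y3⁻¹ (x1 * x2) * cmt (y2⁻¹ * (x2⁻¹ * y1⁻¹ * x2)) x3
      = cmt y3⁻¹ x2 * cmt y2⁻¹ x3 * cmt y3⁻¹ x1 * cmt y1⁻¹ x3 := by
  set A := cmt y3⁻¹ x1
  set B := cmt y2⁻¹ x3
  set E := cmt y1⁻¹ x3
  set v := cmt y1⁻¹ (x2 * y2)
  have conj_A : x2⁻¹ * A * x2 = y2 * A * y2⁻¹ := by
    calc x2⁻¹ * A * x2 = y2 * ((x2 * y2)⁻¹ * A * (x2 * y2)) * y2⁻¹ := by group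
      _ = y2 * A * y2⁻¹ := by rw [hA.inv_mul_cancel]
  have expand_E : cmt (y2⁻¹ * (x2⁻¹ * y1⁻¹ * x2)) x3 = y2 * E * y2⁻¹ * B := by
    calc cmt (y2⁻¹ * (x2⁻¹ * y1⁻¹ * x2)) x3 = y2 * (v⁻¹ * E * v * cmt v x3) * y2⁻¹ * B := by
          simp only [v, E, B, cmt]; group
      _ = y2 * E * y2⁻¹ * B := by rw [cmt_eq_one_of_commute hv, hvE.inv_mul_cancel, mul_one]
  calc cmt y3⁻¹ (x1 * x2) * cmt (y2⁻¹ * (x2⁻¹ * y1⁻¹ * x2)) x3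
      = cmt y3⁻¹ x2 * (x2⁻¹ * A * x2) * (y2 * E * y2⁻¹ * B) := by
        rw [expand_E]; simp only [A, cmt]; group
    _ = cmt y3⁻¹ x2 * (y2 * (A * E) * y2⁻¹) * B := by rw [conj_A]; group
    _ = cmt y3⁻¹ x2 * B * (A * E) := by rw [hAE.mul_inv_cancel, mul_assoc, ← hAEB.eq, ← mul_assoc]
    _ = cmt y3⁻¹ x2 * B * A * E := by rw [mul_assoc _ A]

theorem commute_mk'_of_commutator_le {D H K : Subgroup G} [D.Normal] (hHK : ⁅H, K⁆ ≤ D) {a b : G}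
    (ha : a ∈ H) (hb : b ∈ K) : Commute (QuotientGroup.mk' D a) (QuotientGroup.mk' D b) := by
  rw [← commutatorElement_eq_one_iff_commute, ← map_commutatorElement, ← MonoidHom.mem_ker,
    QuotientGroup.ker_mk']
  exact hHK (Subgroup.commutator_mem_commutator ha hb)

end Cmt

theorem stmt_7_general {F : Type*} [Group F] (R1 R2 R3 : Subgroup F)
    [R1.Normal] [R2.Normal] [R3.Normal]
    (D : Subgroup F)
    (hD : D = ⁅R1, R2 ⊓ R3⁆ ⊔ ⁅R2, R3 ⊓ R1⁆ ⊔ ⁅R3, R1 ⊓ R2⁆)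
    (x1 x2 x3 y1 y2 y3 : F)
    (hx1 : x1 ∈ R1) (hx3 : x3 ∈ R1)
    (hy1 : y1 ∈ R2) (hy2 : y2 ∈ R2) (hy3 : y3 ∈ R2)
    (h1 : x1 * y1 ∈ R3) (h2 : x2 * y2 ∈ R3) (h3 : x3 * y3 ∈ R3) :
    cmt y3⁻¹ (x1 * x2) * cmt (y2⁻¹ * (x2⁻¹ * y1⁻¹ * x2)) x3 *
      (cmt y3⁻¹ x2 * cmt y2⁻¹ x3 * cmt y3⁻¹ x1 * cmt y1⁻¹ x3)⁻¹ ∈ D := by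
  have : D.Normal := by rw [hD]; infer_instance
  have hD1 : ⁅R1, R2 ⊓ R3⁆ ≤ D := by rw [hD]; exact le_sup_left.trans le_sup_left
  have hD2 : ⁅R2, R3 ⊓ R1⁆ ≤ D := by rw [hD]; exact le_sup_right.trans le_sup_left
  have hD3 : ⁅R3, R1 ⊓ R2⁆ ≤ D := by rw [hD]; exact le_sup_right
  have hv : cmt y1⁻¹ (x2 * y2) ∈ R2 ⊓ R3 := cmt_mem_inf (inv_mem hy1) h2
  have hA : cmt y3⁻¹ x1 ∈ R2 ⊓ R1 := cmt_mem_inf (inv_mem hy3) hx1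
  have hB : cmt y2⁻¹ x3 ∈ R2 := (cmt_mem_inf (inv_mem hy2) hx3).1
  have hE : cmt y1⁻¹ x3 ∈ R2 ⊓ R1 := cmt_mem_inf (inv_mem hy1) hx3
  have hAE : cmt y3⁻¹ x1 * cmt y1⁻¹ x3 ∈ R3 ⊓ R1 :=
    ⟨cmt_inv_mul_cmt_inv_mem h3 h1, mul_mem hA.2 hE.2⟩
  rw [← QuotientGroup.ker_mk' D, MonoidHom.mem_ker, map_mul, map_inv, mul_inv_eq_one]
  simp only [map_mul, map_inv, map_cmt_s7]
  apply cmt_additivity_of_commute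
  · simpa only [map_mul, map_inv, map_cmt_s7] using (commute_mk'_of_commutator_le hD1 hx3 hv).symm
  · simpa only [map_mul, map_inv, map_cmt_s7] using (commute_mk'_of_commutator_le hD1 hE.2 hv).symm
  · simpa only [map_mul, map_inv, map_cmt_s7] using commute_mk'_of_commutator_le hD3 h2 ⟨hA.2, hA.1⟩
  · simpa only [map_mul, map_inv, map_cmt_s7] using commute_mk'_of_commutator_le hD2 hy2 hAE
  · simpa only [map_mul, map_inv, map_cmt_s7] using commute_mk'_of_commutator_le hD2 hB hAE

theorem stmt_7 {F : Type*} [Group F] (R1 R2 R3 : Subgroup F)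
    [R1.Normal] [R2.Normal] [R3.Normal]
    (D : Subgroup F)
    (hD : D = ⁅R1, R2 ⊓ R3⁆ ⊔ ⁅R2, R3 ⊓ R1⁆ ⊔ ⁅R3, R1 ⊓ R2⁆)
    (x1 x2 x3 y1 y2 y3 : F)
    (hx1 : x1 ∈ R1) (hx2 : x2 ∈ R1) (hx3 : x3 ∈ R1)
    (hy1 : y1 ∈ R2) (hy2 : y2 ∈ R2) (hy3 : y3 ∈ R2)
    (h1 : x1 * y1 ∈ R3) (h2 : x2 * y2 ∈ R3) (h3 : x3 * y3 ∈ R3) :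
    cmt y3⁻¹ (x1 * x2) * cmt (y2⁻¹ * (x2⁻¹ * y1⁻¹ * x2)) x3 *
      (cmt y3⁻¹ x2 * cmt y2⁻¹ x3 * cmt y3⁻¹ x1 * cmt y1⁻¹ x3)⁻¹ ∈ D :=
  stmt_7_general R1 R2 R3 D hD x1 x2 x3 y1 y2 y3 hx1 hx3 hy1 hy2 hy3 h1 h2 h3
end

section
/- Let F be a group with normal subgroups R1, R2, R3. Let a, b, c ∈ R1, t ∈ R2, and S1 ∈ R2 with a·b·c·S1 ∈ R3. Set S2 = c⁻¹·(b⁻¹)^t·b·c·S1. Then S2 ∈ R2, a·(b^t)·c·S2 = a·b·c·S1, and [a·(b^t)·c, S2] ≡ [a·b·c, S1] modulo [R3, R1 ⊓ R2]. -/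
/-!
Put `X = a b^t c`, `Y = a b c` and `w = Y S1`, so that `S2 = X⁻¹ w`. Then
`[X, S2] [Y, S1]⁻¹ = X⁻¹ [w⁻¹, X Y⁻¹] X` (with Mathlib's `⁅g, h⁆ = g h g⁻¹ h⁻¹`), where
`w ∈ R3` and `X Y⁻¹ = a [t⁻¹, b] a⁻¹ ∈ R1 ⊓ R2`; normality of `⁅R3, R1 ⊓ R2⁆` finishes.
-/

open scoped commutatorElement

section

variable {F : Type*} [Group F]

theorem cmt_inv_mul_mul_inv_cmt (X Y S : F) :
    cmt X (X⁻¹ * (Y * S)) * (cmt Y S)⁻¹ = X⁻¹ * ⁅(Y * S)⁻¹, X * Y⁻¹⁆ * X := by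
  simp only [cmt, commutatorElement_def]
  group

theorem cmt_inv_mul_mul_inv_cmt_mem_commutator {H K : Subgroup F} [H.Normal] [K.Normal]
    {X Y S : F} (hw : Y * S ∈ H) (hXY : X * Y⁻¹ ∈ K) :
    cmt X (X⁻¹ * (Y * S)) * (cmt Y S)⁻¹ ∈ ⁅H, K⁆ := by
  rw [cmt_inv_mul_mul_inv_cmt]
  simpa using (Subgroup.commutator_normal H K).conj_mem _
    (Subgroup.commutator_mem_commutator (inv_mem hw) hXY) X⁻¹

theorem commutatorElement_mem_inf {H K : Subgroup F} [H.Normal] [K.Normal] {g h : F}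
    (hg : g ∈ H) (hh : h ∈ K) : ⁅g, h⁆ ∈ H ⊓ K :=
  Subgroup.commutator_le_inf H K (Subgroup.commutator_mem_commutator hg hh)

end

theorem stmt_8_general {F : Type*} [Group F] (R1 R2 R3 : Subgroup F)
    [R1.Normal] [R2.Normal] [R3.Normal]
    (a b c t S1 : F) (hb : b ∈ R1)
    (ht : t ∈ R2) (hS1 : S1 ∈ R2) (h3 : a * b * c * S1 ∈ R3) :
    c⁻¹ * (t⁻¹ * b⁻¹ * t) * b * c * S1 ∈ R2 ∧
    a * (t⁻¹ * b * t) * c * (c⁻¹ * (t⁻¹ * b⁻¹ * t) * b * c * S1) = a * b * c * S1 ∧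
    cmt (a * (t⁻¹ * b * t) * c) (c⁻¹ * (t⁻¹ * b⁻¹ * t) * b * c * S1) *
      (cmt (a * b * c) S1)⁻¹ ∈ (⁅R3, R1 ⊓ R2⁆ : Subgroup F) := by
  set X := a * (t⁻¹ * b * t) * c
  set Y := a * b * c
  have hS2 : c⁻¹ * (t⁻¹ * b⁻¹ * t) * b * c * S1 = X⁻¹ * (Y * S1) := by
    simp only [X, Y]
    group
  have hXY : X * Y⁻¹ ∈ R1 ⊓ R2 := by
    have hXY_eq : X * Y⁻¹ = a * ⁅t⁻¹, b⁆ * a⁻¹ := by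
      simp only [X, Y, commutatorElement_def]
      group
    rw [hXY_eq, inf_comm]
    exact (Subgroup.normal_inf_normal R2 R1).conj_mem _
      (commutatorElement_mem_inf (inv_mem ht) hb) a
  rw [hS2]
  refine ⟨?_, by group, cmt_inv_mul_mul_inv_cmt_mem_commutator h3 hXY⟩
  have hX_Y : X⁻¹ * Y ∈ R2 := by
    convert ‹R2.Normal›.conj_mem _ (inv_mem hXY.2) X⁻¹ using 1
    group
  simpa only [mul_assoc] using mul_mem hX_Y hS1

theorem stmt_8 {F : Type*} [Group F] (R1 R2 R3 : Subgroup F)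
    [R1.Normal] [R2.Normal] [R3.Normal]
    (a b c t S1 : F) (ha : a ∈ R1) (hb : b ∈ R1) (hc : c ∈ R1)
    (ht : t ∈ R2) (hS1 : S1 ∈ R2) (h3 : a * b * c * S1 ∈ R3) :
    c⁻¹ * (t⁻¹ * b⁻¹ * t) * b * c * S1 ∈ R2 ∧
    a * (t⁻¹ * b * t) * c * (c⁻¹ * (t⁻¹ * b⁻¹ * t) * b * c * S1) = a * b * c * S1 ∧
    cmt (a * (t⁻¹ * b * t) * c) (c⁻¹ * (t⁻¹ * b⁻¹ * t) * b * c * S1) *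
      (cmt (a * b * c) S1)⁻¹ ∈ (⁅R3, R1 ⊓ R2⁆ : Subgroup F) :=
  stmt_8_general R1 R2 R3 a b c t S1 hb ht hS1 h3
end

section
/- Let F be a group with normal subgroups R1, R2, R3 and D = [R1, R2 ⊓ R3] ⊔ [R2, R3 ⊓ R1] ⊔ [R3, R1 ⊓ R2]. If r ∈ R1, s ∈ R2, t ∈ R3 and r·s·t = 1, then [r, s] ∈ R1 ⊓ R2 ⊓ R3, and for any w ∈ F, [r^w, s^w] is congruent to w⁻¹·[r,s]·w modulo D (indeed they are equal as elements of F). -/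
section Commutator

variable {F : Type*} [Group F]

theorem cmt_conj (w x y : F) : cmt (w⁻¹ * x * w) (w⁻¹ * y * w) = w⁻¹ * cmt x y * w := by
  unfold cmt; group

theorem cmt_mem_left (N : Subgroup F) [hN : N.Normal] {x : F} (y : F) (hx : x ∈ N) :
    cmt x y ∈ N := by
  have hconj : y⁻¹ * x * y ∈ N := by simpa using hN.conj_mem x hx y⁻¹
  have hsplit : cmt x y = x⁻¹ * (y⁻¹ * x * y) := by unfold cmt; group
  rw [hsplit]
  exact N.mul_mem (N.inv_mem hx) hconj

theorem cmt_mem_right (N : Subgroup F) [hN : N.Normal] (x : F) {y : F} (hy : y ∈ N) :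
    cmt x y ∈ N := by
  have hconj : x⁻¹ * y⁻¹ * x ∈ N := by simpa using hN.conj_mem y⁻¹ (N.inv_mem hy) x⁻¹
  exact N.mul_mem hconj hy

theorem cmt_mem_of_mul_mem (N : Subgroup F) [hN : N.Normal] {x y : F} (hxy : x * y ∈ N) :
    cmt x y ∈ N := by
  have hconj : y * x ∈ N := by simpa using hN.conj_mem _ hxy x⁻¹
  have hsplit : cmt x y = (y * x)⁻¹ * (x * y) := by unfold cmt; group
  rw [hsplit]
  exact N.mul_mem (N.inv_mem hconj) hxy

end Commutator

theorem stmt_14_general {F : Type*} [Group F] (R1 R2 R3 : Subgroup F)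
    [R1.Normal] [R2.Normal] [R3.Normal]
    (D : Subgroup F)
    (r s t : F) (hr : r ∈ R1) (hs : s ∈ R2) (ht : t ∈ R3)
    (h : r * s * t = 1) :
    cmt r s ∈ R1 ⊓ R2 ⊓ R3 ∧
    ∀ w : F, cmt (w⁻¹ * r * w) (w⁻¹ * s * w) = w⁻¹ * cmt r s * w ∧
      cmt (w⁻¹ * r * w) (w⁻¹ * s * w) * (w⁻¹ * cmt r s * w)⁻¹ ∈ D := by
  have hrs : r * s ∈ R3 := by
    rw [eq_inv_of_mul_eq_one_left h]
    exact R3.inv_mem ht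
  refine ⟨⟨⟨cmt_mem_left R1 s hr, cmt_mem_right R2 r hs⟩, cmt_mem_of_mul_mem R3 hrs⟩,
    fun w => ⟨cmt_conj w r s, ?_⟩⟩
  rw [cmt_conj, mul_inv_cancel]
  exact D.one_mem

theorem stmt_14 {F : Type*} [Group F] (R1 R2 R3 : Subgroup F)
    [R1.Normal] [R2.Normal] [R3.Normal]
    (D : Subgroup F)
    (hD : D = ⁅R1, R2 ⊓ R3⁆ ⊔ ⁅R2, R3 ⊓ R1⁆ ⊔ ⁅R3, R1 ⊓ R2⁆)
    (r s t : F) (hr : r ∈ R1) (hs : s ∈ R2) (ht : t ∈ R3)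
    (h : r * s * t = 1) :
    cmt r s ∈ R1 ⊓ R2 ⊓ R3 ∧
    ∀ w : F, cmt (w⁻¹ * r * w) (w⁻¹ * s * w) = w⁻¹ * cmt r s * w ∧
      cmt (w⁻¹ * r * w) (w⁻¹ * s * w) * (w⁻¹ * cmt r s * w)⁻¹ ∈ D :=
  stmt_14_general R1 R2 R3 D r s t hr hs ht h
end
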